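/- Let ν: ℝ → [0,∞) be a C² probability-density-type function with ν, ν'' ∈ L¹(ℝ, dx), let γ: 𝒟 → ℝ satisfy inf_{y∈𝒟} |γ(y)| ≥ ε > 0, and define ν_y(x) = (1/|γ(y)|)·ν(x/γ(y)). Then there exists c ≥ 0 (independent of y and Δx ∈ (0,1]) such that ∑_{l∈ℤ} ν_y(l·Δx)·Δx ≤ c for all y ∈ 𝒟 and all Δx ∈ (0,1]. In fact one may take c = ∫_ℝ ν(x)dx + (1/(12ε²))·∫_ℝ |ν''(x)|dx. -/

import Mathlib

/-!
On a cell `[a, a + 1]`, integrating `f''` twice by parts against the Peano kernel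
`eulerKernel (t - a) = B₂(t - a) / 2`, which is bounded by `1 / 12`, gives
`(f a + f (a + 1)) / 2 ≤ ∫ₐ^{a+1} f + (f' (a + 1) - f' a) / 12 + (1 / 12) ∫ₐ^{a+1} |f''|`.
Summing over the cells of `[-N, N]` telescopes the derivative terms. When `l ↦ f l` is summable
the boundary terms vanish as `N → ∞`: `f'` has limits at `±∞` because `f''` is integrable, and by
the mean value theorem these limits are those of `f (n + 1) - f n`, i.e. `0`. Hence
`∑ₗ f l ≤ ∫ f + (1 / 12) ∫ |f''|`, and applying this to `x ↦ ν (a x)` with `a = Δx / γ y`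
scales the error term by `a² ≤ 1 / ε²`.
-/

open MeasureTheory Filter Topology Set

noncomputable def eulerKernel (t : ℝ) : ℝ := (t ^ 2 - t + 1 / 6) / 2

lemma hasDerivAt_eulerKernel (t : ℝ) : HasDerivAt eulerKernel (t - 1 / 2) t := by
  unfold eulerKernel
  exact ((((hasDerivAt_pow 2 t).sub (hasDerivAt_id' t)).add_const (1 / 6)).div_const 2).congr_deriv
    (by ring)

lemma continuous_eulerKernel : Continuous eulerKernel :=
  continuous_iff_continuousAt.2 fun t => (hasDerivAt_eulerKernel t).continuousAt

lemma abs_eulerKernel_le {t : ℝ} (h₀ : 0 ≤ t) (h₁ : t ≤ 1) : |eulerKernel t| ≤ 1 / 12 := by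
  rw [abs_le, eulerKernel]
  constructor <;> nlinarith [sq_nonneg (t - 1 / 2)]

section

variable {f : ℝ → ℝ}

lemma integral_eulerKernel_mul_deriv_deriv (hf : ContDiff ℝ 2 f) (a : ℝ) :
    ∫ t in a..a + 1, eulerKernel (t - a) * deriv (deriv f) t =
      (∫ t in a..a + 1, f t) + (deriv f (a + 1) - deriv f a) / 12 - (f a + f (a + 1)) / 2 := by
  have hf' : ContDiff ℝ 1 (deriv f) := hf.deriv'
  have hK : Continuous fun t => eulerKernel (t - a) :=
    continuous_eulerKernel.comp (continuous_sub_right a)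
  have hFTC : ∫ t in a..a + 1, (eulerKernel (t - a) * deriv (deriv f) t - f t) =
      (eulerKernel 1 * deriv f (a + 1) - 1 / 2 * f (a + 1)) -
        (eulerKernel 0 * deriv f a + 1 / 2 * f a) := by
    rw [intervalIntegral.integral_eq_sub_of_hasDerivAt
      (f := fun t => eulerKernel (t - a) * deriv f t - (t - a - 1 / 2) * f t)]
    · norm_num
    · intro t _
      have hKt := (hasDerivAt_eulerKernel (t - a)).comp t ((hasDerivAt_id t).sub_const a)
      have hf't := ((hf'.differentiable one_ne_zero) t).hasDerivAt
      have hft := ((hf.differentiable two_ne_zero) t).hasDerivAt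
      refine ((hKt.mul hf't).sub ((((hasDerivAt_id t).sub_const a).sub_const (1 / 2)).mul
        hft)).congr_deriv ?_
      simp only [id, Function.comp]
      ring
    · exact ((hK.mul (hf'.continuous_deriv le_rfl)).sub hf.continuous).intervalIntegrable _ _
  have hKf'' : IntervalIntegrable (fun t => eulerKernel (t - a) * deriv (deriv f) t) volume a
      (a + 1) := (hK.mul (hf'.continuous_deriv le_rfl)).intervalIntegrable _ _
  rw [intervalIntegral.integral_sub hKf'' (hf.continuous.intervalIntegrable _ _)] at hFTC
  rw [show eulerKernel 0 = 1 / 12 by norm_num [eulerKernel],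
    show eulerKernel 1 = 1 / 12 by norm_num [eulerKernel]] at hFTC
  linarith

lemma trapezoid_le_integral_add (hf : ContDiff ℝ 2 f) (a : ℝ) :
    (f a + f (a + 1)) / 2 ≤ (∫ t in a..a + 1, f t) + (deriv f (a + 1) - deriv f a) / 12 +
      1 / 12 * ∫ t in a..a + 1, |deriv (deriv f) t| := by
  have hf'' : Continuous (deriv (deriv f)) := hf.deriv'.continuous_deriv le_rfl
  have hK : Continuous fun t => eulerKernel (t - a) :=
    continuous_eulerKernel.comp (continuous_sub_right a)
  have hbound : ∫ t in a..a + 1, -(eulerKernel (t - a) * deriv (deriv f) t) ≤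
      ∫ t in a..a + 1, 1 / 12 * |deriv (deriv f) t| := by
    refine intervalIntegral.integral_mono_on (by linarith)
      ((hK.mul hf'').neg.intervalIntegrable _ _)
      ((continuous_const.mul hf''.abs).intervalIntegrable _ _) fun t ht => ?_
    calc -(eulerKernel (t - a) * deriv (deriv f) t)
        ≤ |eulerKernel (t - a)| * |deriv (deriv f) t| := by rw [← abs_mul]; exact neg_le_abs _
      _ ≤ 1 / 12 * |deriv (deriv f) t| := by
        gcongr
        exact abs_eulerKernel_le (by linarith [ht.1]) (by linarith [ht.2])
  rw [intervalIntegral.integral_neg, intervalIntegral.integral_const_mul,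
    integral_eulerKernel_mul_deriv_deriv hf] at hbound
  linarith

lemma sum_Icc_le_integral_add (hf : ContDiff ℝ 2 f) {m n : ℤ} (hmn : m ≤ n) :
    ∑ l ∈ Finset.Icc m n, f l ≤ (∫ t in m..n, f t) + (f m + f n) / 2 +
      (deriv f n - deriv f m) / 12 + 1 / 12 * ∫ t in m..n, |deriv (deriv f) t| := by
  induction n, hmn using Int.leInduction with
  | base => simp
  | succ n hmn ih =>
    have hf'' : Continuous (deriv (deriv f)) := hf.deriv'.continuous_deriv le_rfl
    rw [← Finset.insert_Icc_right_eq_Icc_add_one (by omega), Finset.sum_insert (by simp),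
      ← intervalIntegral.integral_add_adjacent_intervals (b := (n : ℝ))
        (hf.continuous.intervalIntegrable _ _) (hf.continuous.intervalIntegrable _ _),
      ← intervalIntegral.integral_add_adjacent_intervals (b := (n : ℝ))
        (hf''.abs.intervalIntegrable _ _) (hf''.abs.intervalIntegrable _ _)]
    push_cast
    linarith [trapezoid_le_integral_add hf n]

lemma deriv_deriv_comp_mul_left (a : ℝ) :
    deriv (deriv fun x => f (a * x)) = fun x => a ^ 2 * deriv (deriv f) (a * x) := by
  have hcomp : ∀ g : ℝ → ℝ, deriv (fun x => g (a * x)) = fun x => a * deriv g (a * x) :=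
    fun g => funext fun x => deriv_comp_mul_left a g x
  rw [hcomp, deriv_const_mul_field', hcomp]
  ext x
  ring

lemma intervalIntegral_le_integral_of_nonneg (hfi : Integrable f) (hf0 : ∀ x, 0 ≤ f x) {a b : ℝ}
    (hab : a ≤ b) : ∫ t in a..b, f t ≤ ∫ x, f x := by
  rw [intervalIntegral.integral_of_le hab]
  exact setIntegral_le_integral hfi (Eventually.of_forall hf0)

lemma tendsto_deriv_natCast_atTop_zero (hf : ContDiff ℝ 2 f)
    (hf2 : IntegrableOn (deriv (deriv f)) (Ioi 0))
    (hf_lim : Tendsto (fun n : ℕ => f n) atTop (𝓝 0)) :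
    Tendsto (fun n : ℕ => deriv f n) atTop (𝓝 0) := by
  have hL := tendsto_limUnder_of_hasDerivAt_of_integrableOn_Ioi
    (fun x _ => (hf.deriv'.differentiable one_ne_zero x).hasDerivAt) hf2
  have hMVT : ∀ n : ℕ, ∃ ξ ∈ Ioo (n : ℝ) (n + 1), deriv f ξ = f (n + 1) - f n := fun n => by
    simpa using exists_deriv_eq_slope f (lt_add_one (n : ℝ)) hf.continuous.continuousOn
      (hf.differentiable two_ne_zero).differentiableOn
  choose ξ hξ hξf using hMVT
  have hξ_top : Tendsto ξ atTop atTop :=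
    tendsto_atTop_mono (fun n => (hξ n).1.le) tendsto_natCast_atTop_atTop
  have hslope : Tendsto (fun n : ℕ => f (n + 1) - f n) atTop (𝓝 0) := by
    simpa using ((tendsto_add_atTop_iff_nat 1).2 hf_lim).sub hf_lim
  have hL0 : limUnder atTop (deriv f) = 0 := by
    refine tendsto_nhds_unique ?_ hslope
    simpa only [Function.comp_def, hξf] using hL.comp hξ_top
  rw [hL0] at hL
  exact hL.comp tendsto_natCast_atTop_atTop

theorem tsum_int_le_integral_add (hf0 : ∀ x, 0 ≤ f x) (hf : ContDiff ℝ 2 f) (hfi : Integrable f)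
    (hf2 : Integrable (deriv (deriv f))) :
    ∑' l : ℤ, f l ≤ (∫ x, f x) + 1 / 12 * ∫ x, |deriv (deriv f) x| := by
  have hI₀ : 0 ≤ ∫ x, f x := integral_nonneg hf0
  have hI₂ : 0 ≤ ∫ x, |deriv (deriv f) x| := integral_nonneg fun x => abs_nonneg _
  by_cases hs : Summable fun l : ℤ => f l
  swap
  · rw [tsum_eq_zero_of_not_summable hs]
    positivity
  have hf_top : Tendsto (fun n : ℕ => f n) atTop (𝓝 0) := by
    simpa [Function.comp_def] using (hs.comp_injective Nat.cast_injective).tendsto_atTop_zero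
  have hf_bot : Tendsto (fun n : ℕ => f (-n)) atTop (𝓝 0) := by
    simpa [Function.comp_def] using
      (hs.comp_injective (neg_injective.comp Nat.cast_injective)).tendsto_atTop_zero
  have hf'_top := tendsto_deriv_natCast_atTop_zero hf hf2.integrableOn hf_top
  have hf'_bot : Tendsto (fun n : ℕ => deriv f (-n)) atTop (𝓝 0) := by
    have hg : ContDiff ℝ 2 fun x => f (-1 * x) := hf.comp (contDiff_const.mul contDiff_id)
    have hg2 : Integrable (deriv (deriv fun x => f (-1 * x))) := by
      rw [deriv_deriv_comp_mul_left]
      exact (hf2.comp_mul_left' (by norm_num)).const_mul _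
    simpa [deriv_comp_neg] using
      (tendsto_deriv_natCast_atTop_zero hg hg2.integrableOn (by simpa using hf_bot)).neg
  have hpartial : ∀ N : ℕ, ∑ l ∈ Finset.Icc (-N : ℤ) N, f l ≤ (∫ x, f x) + (f (-N) + f N) / 2 +
      (deriv f N - deriv f (-N)) / 12 + 1 / 12 * ∫ x, |deriv (deriv f) x| := by
    intro N
    have h := sum_Icc_le_integral_add hf (neg_le_self N.cast_nonneg : (-N : ℤ) ≤ N)
    rw [Int.cast_neg, Int.cast_natCast] at h
    have hN : (-N : ℝ) ≤ N := neg_le_self N.cast_nonneg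
    refine h.trans ?_
    gcongr
    · exact intervalIntegral_le_integral_of_nonneg hfi hf0 hN
    · exact intervalIntegral_le_integral_of_nonneg hf2.abs (fun x => abs_nonneg _) hN
  refine le_of_tendsto_of_tendsto' (hs.hasSum.comp Finset.tendsto_Icc_neg) ?_ hpartial
  simpa using (((tendsto_const_nhds (x := ∫ x, f x)).add ((hf_bot.add hf_top).div_const 2)).add
    ((hf'_top.sub hf'_bot).div_const 12)).add
    (tendsto_const_nhds (x := 1 / 12 * ∫ x, |deriv (deriv f) x|))

theorem abs_mul_tsum_int_comp_mul_left_le (hf0 : ∀ x, 0 ≤ f x) (hf : ContDiff ℝ 2 f)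
    (hfi : Integrable f) (hf2 : Integrable (deriv (deriv f))) {a : ℝ} (ha : a ≠ 0) :
    |a| * ∑' l : ℤ, f (a * l) ≤ (∫ x, f x) + a ^ 2 / 12 * ∫ x, |deriv (deriv f) x| := by
  have h := tsum_int_le_integral_add (f := fun x => f (a * x)) (fun x => hf0 _)
    (hf.comp (contDiff_const.mul contDiff_id)) (hfi.comp_mul_left' ha)
    (by rw [deriv_deriv_comp_mul_left]; exact (hf2.comp_mul_left' ha).const_mul _)
  simp only [deriv_deriv_comp_mul_left, abs_mul, abs_sq] at h
  rw [Measure.integral_comp_mul_left, integral_const_mul,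
    Measure.integral_comp_mul_left (fun x => |deriv (deriv f) x|), smul_eq_mul, smul_eq_mul,
    abs_inv] at h
  have ha' : 0 < |a| := abs_pos.2 ha
  calc |a| * ∑' l : ℤ, f (a * l)
      ≤ |a| * ((|a|⁻¹ * ∫ x, f x) + 1 / 12 * (a ^ 2 * (|a|⁻¹ * ∫ x, |deriv (deriv f) x|))) :=
        mul_le_mul_of_nonneg_left h ha'.le
    _ = (∫ x, f x) + a ^ 2 / 12 * ∫ x, |deriv (deriv f) x| := by
        field_simp

end

theorem scaled_density_discrete_mass_bound
    {𝒟 : Type*}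
    (ν : ℝ → ℝ) (hν_nonneg : ∀ x, 0 ≤ ν x) (hν : ContDiff ℝ 2 ν)
    (hν0 : Integrable ν) (hν2 : Integrable (deriv (deriv ν)))
    (γ : 𝒟 → ℝ) (ε : ℝ) (hε : 0 < ε) (hγ : ∀ y, ε ≤ |γ y|) :
    ∃ c : ℝ, 0 ≤ c ∧
      c = (∫ x : ℝ, ν x) + 1 / (12 * ε ^ 2) * ∫ x : ℝ, |deriv (deriv ν) x| ∧
      ∀ y : 𝒟, ∀ Δx : ℝ, 0 < Δx → Δx ≤ 1 →
        (∑' l : ℤ, (1 / |γ y| * ν ((l * Δx) / γ y)) * Δx) ≤ c := by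
  have hI₀ : 0 ≤ ∫ x, ν x := integral_nonneg hν_nonneg
  have hI₂ : 0 ≤ ∫ x, |deriv (deriv ν) x| := integral_nonneg fun x => abs_nonneg _
  refine ⟨_, by positivity, rfl, fun y Δx hΔ hΔ₁ => ?_⟩
  have hγy : γ y ≠ 0 := abs_pos.1 (hε.trans_le (hγ y))
  have hsum : ∑' l : ℤ, (1 / |γ y| * ν ((l * Δx) / γ y)) * Δx =
      |Δx / γ y| * ∑' l : ℤ, ν (Δx / γ y * l) := by
    rw [← tsum_mul_left, abs_div, abs_of_pos hΔ]
    congr 1 with l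
    ring_nf
  have hscale : (Δx / γ y) ^ 2 / 12 ≤ 1 / (12 * ε ^ 2) := by
    have h : |Δx / γ y| ≤ 1 / ε := by
      rw [abs_div, abs_of_pos hΔ]
      exact div_le_div₀ zero_le_one hΔ₁ hε (hγ y)
    calc (Δx / γ y) ^ 2 / 12 = |Δx / γ y| ^ 2 / 12 := by rw [sq_abs]
      _ ≤ (1 / ε) ^ 2 / 12 := by gcongr
      _ = 1 / (12 * ε ^ 2) := by ring
  rw [hsum]
  refine (abs_mul_tsum_int_comp_mul_left_le hν_nonneg hν hν0 hν2 (div_ne_zero hΔ.ne' hγy)).trans ?_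
  linarith [mul_le_mul_of_nonneg_right hscale hI₂]
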